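/- With the setup of the measurement lemma: Tr(Eρ) = 1/2 if and only if neither P nor -P lies in S. -/

import Mathlib

open Matrix

noncomputable def σI : Matrix (Fin 2) (Fin 2) ℂ := 1
noncomputable def σX : Matrix (Fin 2) (Fin 2) ℂ := !![0, 1; 1, 0]
noncomputable def σY : Matrix (Fin 2) (Fin 2) ℂ := !![0, -Complex.I; Complex.I, 0]
noncomputable def σZ : Matrix (Fin 2) (Fin 2) ℂ := !![1, 0; 0, -1]

/-- The four single-qubit Pauli matrices. -/
def PauliOps : Set (Matrix (Fin 2) (Fin 2) ℂ) := {σI, σX, σY, σZ}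

/-- Allowed global phases. -/
def Phases : Set ℂ := {1, -1, Complex.I, -Complex.I}

/-- The matrix on (ℂ²)^⊗n given by the tensor product P 0 ⊗ ⋯ ⊗ P (n-1). -/
noncomputable def pauliTensor (n : ℕ) (P : Fin n → Matrix (Fin 2) (Fin 2) ℂ) :
    Matrix (Fin n → Fin 2) (Fin n → Fin 2) ℂ :=
  Matrix.of fun f g => ∏ i, P i (f i) (g i)

/-- The n-qubit Pauli group: all c • (P¹ ⊗ ⋯ ⊗ Pⁿ) with c ∈ {±1, ±i}, Pⁱ ∈ {I,X,Y,Z}. -/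
def PauliGroup (n : ℕ) : Set (Matrix (Fin n → Fin 2) (Fin n → Fin 2) ℂ) :=
  {M | ∃ (c : ℂ) (P : Fin n → Matrix (Fin 2) (Fin 2) ℂ),
    c ∈ Phases ∧ (∀ i, P i ∈ PauliOps) ∧ M = c • pauliTensor n P}

/-- Abbreviation for n-qubit operators. -/
abbrev MatN (n : ℕ) := Matrix (Fin n → Fin 2) (Fin n → Fin 2) ℂ

/-!
Expanding, `Tr(Eρ) = (Tr ρ + 2⁻ⁿ ∑_{g ∈ S} Tr(P g)) / 2`. A Pauli operator is traceless unless
it is a phase times the identity, so `Tr(P g) ≠ 0` forces `g = c • P` for a phase `c`; since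
`g² = c² • 1 ≠ -1`, only `c = ±1` survives. Hence `Tr ρ = 1` (the case `P = 1`) and the sum is
`2ⁿ`, `-2ⁿ` or `0` according as `P ∈ S`, `-P ∈ S`, or neither, giving `Tr(Eρ) = 1, 0, 1/2`.
-/

namespace Phases

lemma mul_mem {c d : ℂ} (hc : c ∈ Phases) (hd : d ∈ Phases) : c * d ∈ Phases := by
  rcases hc with rfl | rfl | rfl | rfl <;> rcases hd with rfl | rfl | rfl | rfl <;>
    simp [Phases]

lemma prod_mem {ι : Type*} (s : Finset ι) {c : ι → ℂ} (hc : ∀ i ∈ s, c i ∈ Phases) :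
    ∏ i ∈ s, c i ∈ Phases :=
  Finset.prod_induction c (· ∈ Phases) (fun _ _ => mul_mem) (Or.inl rfl) hc

lemma mul_star_self {c : ℂ} (hc : c ∈ Phases) : c * star c = 1 := by
  rcases hc with rfl | rfl | rfl | rfl <;> simp

lemma eq_one_or_eq_neg_one {c : ℂ} (hc : c ∈ Phases) (hc2 : c ^ 2 ≠ -1) :
    c = 1 ∨ c = -1 := by
  rcases hc with rfl | rfl | rfl | rfl <;> simp_all

end Phases

namespace PauliOps

lemma mul_conjTranspose_self {A : Matrix (Fin 2) (Fin 2) ℂ} (hA : A ∈ PauliOps) :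
    A * Aᴴ = 1 := by
  rcases hA with rfl | rfl | rfl | rfl <;> ext i j <;> fin_cases i <;> fin_cases j <;>
    simp [σI, σX, σY, σZ, Matrix.mul_apply, Fin.sum_univ_two]

lemma trace_eq_zero {A : Matrix (Fin 2) (Fin 2) ℂ} (hA : A ∈ PauliOps) (h1 : A ≠ 1) :
    A.trace = 0 := by
  rcases hA with rfl | rfl | rfl | rfl
  · exact absurd rfl h1
  all_goals simp [σX, σY, σZ, Matrix.trace_fin_two]

lemma exists_mul_eq_smul {A B : Matrix (Fin 2) (Fin 2) ℂ} (hA : A ∈ PauliOps)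
    (hB : B ∈ PauliOps) :
    ∃ c ∈ Phases, ∃ C ∈ PauliOps, A * B = c • C := by
  rcases hA with rfl | rfl | rfl | rfl <;> rcases hB with rfl | rfl | rfl | rfl <;>
    simp only [Phases, PauliOps, Set.mem_insert_iff, Set.mem_singleton_iff, exists_eq_or_imp,
      exists_eq_left] <;>
    simp [σI, σX, σY, σZ, ← Matrix.ext_iff, Fin.forall_fin_two]

end PauliOps

section pauliTensor

variable {n : ℕ}

lemma pauliTensor_mul (A B : Fin n → Matrix (Fin 2) (Fin 2) ℂ) :
    pauliTensor n A * pauliTensor n B = pauliTensor n (A * B) := by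
  ext f g
  simp only [pauliTensor, Matrix.mul_apply, Matrix.of_apply, Pi.mul_apply,
    ← Finset.prod_mul_distrib]
  exact (Fintype.prod_sum fun i x => A i (f i) x * B i x (g i)).symm

lemma pauliTensor_one : pauliTensor n 1 = 1 := by
  ext f g
  by_cases h : f = g
  · subst h
    simp [pauliTensor]
  · obtain ⟨i, hi⟩ := Function.ne_iff.1 h
    simpa [pauliTensor, Matrix.one_apply, h] using
      Finset.prod_eq_zero (Finset.mem_univ i) (by simp [hi])

lemma pauliTensor_smul (c : Fin n → ℂ) (A : Fin n → Matrix (Fin 2) (Fin 2) ℂ) :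
    pauliTensor n (c • A) = (∏ i, c i) • pauliTensor n A := by
  ext f g
  simp [pauliTensor, Finset.prod_mul_distrib]

lemma trace_pauliTensor (A : Fin n → Matrix (Fin 2) (Fin 2) ℂ) :
    (pauliTensor n A).trace = ∏ i, (A i).trace := by
  simp only [Matrix.trace, Matrix.diag, pauliTensor, Matrix.of_apply]
  exact (Fintype.prod_sum fun i x => A i x x).symm

lemma conjTranspose_pauliTensor (A : Fin n → Matrix (Fin 2) (Fin 2) ℂ) :
    (pauliTensor n A)ᴴ = pauliTensor n (fun i => (A i)ᴴ) := by
  ext f g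
  simp [pauliTensor, Matrix.conjTranspose_apply]

end pauliTensor

namespace PauliGroup

variable {n : ℕ}

lemma one_mem : (1 : MatN n) ∈ PauliGroup n :=
  ⟨1, 1, Or.inl rfl, fun _ => Or.inl rfl, by rw [pauliTensor_one, one_smul]⟩

lemma neg_mem {M : MatN n} (hM : M ∈ PauliGroup n) : -M ∈ PauliGroup n := by
  obtain ⟨c, A, hc, hA, rfl⟩ := hM
  refine ⟨-c, A, ?_, hA, by rw [neg_smul]⟩
  rcases hc with rfl | rfl | rfl | rfl <;> simp [Phases]

lemma mul_mem {A B : MatN n} (hA : A ∈ PauliGroup n) (hB : B ∈ PauliGroup n) :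
    A * B ∈ PauliGroup n := by
  obtain ⟨c, A, hc, hA, rfl⟩ := hA
  obtain ⟨d, B, hd, hB, rfl⟩ := hB
  choose e he C hC hAB using fun i => PauliOps.exists_mul_eq_smul (hA i) (hB i)
  have hphase := Phases.mul_mem (Phases.mul_mem hc hd) (Phases.prod_mem Finset.univ fun i _ => he i)
  refine ⟨c * d * ∏ i, e i, C, hphase, hC, ?_⟩
  rw [Matrix.smul_mul, Matrix.mul_smul, pauliTensor_mul, smul_smul,
    show A * B = e • C from funext hAB, pauliTensor_smul, smul_smul]

lemma mul_conjTranspose_self {M : MatN n} (hM : M ∈ PauliGroup n) : M * Mᴴ = 1 := by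
  obtain ⟨c, A, hc, hA, rfl⟩ := hM
  rw [Matrix.conjTranspose_smul, conjTranspose_pauliTensor, Matrix.smul_mul, Matrix.mul_smul,
    pauliTensor_mul, smul_smul, Phases.mul_star_self hc, one_smul,
    show (A * fun i => (A i)ᴴ) = 1 from funext fun i => PauliOps.mul_conjTranspose_self (hA i),
    pauliTensor_one]

lemma mul_self_of_isHermitian {M : MatN n} (hM : M ∈ PauliGroup n) (hMh : M.IsHermitian) :
    M * M = 1 := by
  simpa only [hMh.eq] using mul_conjTranspose_self hM

lemma trace_eq_zero_or_eq_smul_one {M : MatN n} (hM : M ∈ PauliGroup n) :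
    M.trace = 0 ∨ ∃ c ∈ Phases, M = c • 1 := by
  obtain ⟨c, A, hc, hA, rfl⟩ := hM
  by_cases h : A = 1
  · exact Or.inr ⟨c, hc, by rw [h, pauliTensor_one]⟩
  · obtain ⟨i, hi⟩ := Function.ne_iff.1 h
    left
    rw [Matrix.trace_smul, trace_pauliTensor,
      Finset.prod_eq_zero (Finset.mem_univ i) (PauliOps.trace_eq_zero (hA i) hi), smul_zero]

end PauliGroup

lemma MatN.trace_one {n : ℕ} : (1 : MatN n).trace = 2 ^ n := by
  simp [Matrix.trace_one]

structure IsStabiliserGroup {n : ℕ} (S : Subgroup (MatN n)ˣ) : Prop where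
  mem_pauliGroup : ∀ g ∈ S, (g : MatN n) ∈ PauliGroup n
  ne_neg_one : ∀ g ∈ S, (g : MatN n) ≠ -1

namespace IsStabiliserGroup

variable {n : ℕ} {S : Subgroup (MatN n)ˣ} {P : MatN n}

lemma eq_or_eq_neg_of_trace_mul_ne_zero (hS : IsStabiliserGroup S) (hP : P ∈ PauliGroup n)
    (hPP : P * P = 1) {g : (MatN n)ˣ} (hg : g ∈ S) (htr : (P * g).trace ≠ 0) :
    (g : MatN n) = P ∨ (g : MatN n) = -P := by
  obtain ⟨c, hc, hPg⟩ := (PauliGroup.trace_eq_zero_or_eq_smul_one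
    (PauliGroup.mul_mem hP (hS.mem_pauliGroup g hg))).resolve_left htr
  have hgP : (g : MatN n) = c • P := by
    calc (g : MatN n) = P * (P * g) := by rw [← mul_assoc, hPP, one_mul]
      _ = c • P := by rw [hPg, Matrix.mul_smul, mul_one]
  have hc2 : c ^ 2 ≠ -1 := fun h => hS.ne_neg_one (g * g) (mul_mem hg hg) (by
    rw [Units.val_mul, hgP, smul_mul_smul_comm, hPP, ← sq, h, neg_one_smul])
  rcases Phases.eq_one_or_eq_neg_one hc hc2 with rfl | rfl <;> simp [hgP]

lemma ne_neg_of_mem (hS : IsStabiliserGroup S) (hPP : P * P = 1) {u g : (MatN n)ˣ} (hu : u ∈ S)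
    (hg : g ∈ S) (huP : (u : MatN n) = P) : (g : MatN n) ≠ -P :=
  fun hgP => hS.ne_neg_one (u * g) (mul_mem hu hg) (by rw [Units.val_mul, huP, hgP, mul_neg, hPP])

variable [Fintype S]

lemma sum_trace_mul_of_mem (hS : IsStabiliserGroup S) (hP : P ∈ PauliGroup n) (hPP : P * P = 1)
    {u : (MatN n)ˣ} (hu : u ∈ S) (huP : (u : MatN n) = P) :
    ∑ g : S, (P * (g : (MatN n)ˣ)).trace = 2 ^ n := by
  rw [Finset.sum_eq_single_of_mem ⟨u, hu⟩ (Finset.mem_univ _)]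
  · rw [huP, hPP, MatN.trace_one]
  · intro g _ hgu
    by_contra htr
    rcases hS.eq_or_eq_neg_of_trace_mul_ne_zero hP hPP g.2 htr with hgP | hgP
    · exact hgu (Subtype.ext (Units.ext (hgP.trans huP.symm)))
    · exact hS.ne_neg_of_mem hPP hu g.2 huP hgP

lemma sum_trace_mul_of_neg_mem (hS : IsStabiliserGroup S) (hP : P ∈ PauliGroup n)
    (hPP : P * P = 1) {u : (MatN n)ˣ} (hu : u ∈ S) (huP : (u : MatN n) = -P) :
    ∑ g : S, (P * (g : (MatN n)ˣ)).trace = -2 ^ n := by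
  have h := hS.sum_trace_mul_of_mem (PauliGroup.neg_mem hP) (by rw [neg_mul_neg, hPP]) hu huP
  simpa only [neg_mul, Matrix.trace_neg, Finset.sum_neg_distrib, neg_eq_iff_eq_neg] using h

lemma sum_trace_mul_eq_zero (hS : IsStabiliserGroup S) (hP : P ∈ PauliGroup n) (hPP : P * P = 1)
    (hPS : ∀ u ∈ S, (u : MatN n) ≠ P) (hnPS : ∀ u ∈ S, (u : MatN n) ≠ -P) :
    ∑ g : S, (P * (g : (MatN n)ˣ)).trace = 0 :=
  Finset.sum_eq_zero fun g _ => by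
    by_contra htr
    rcases hS.eq_or_eq_neg_of_trace_mul_ne_zero hP hPP g.2 htr with hgP | hgP
    exacts [hPS _ g.2 hgP, hnPS _ g.2 hgP]

lemma sum_trace (hS : IsStabiliserGroup S) :
    ∑ g : S, ((g : (MatN n)ˣ) : MatN n).trace = 2 ^ n := by
  simpa only [one_mul] using hS.sum_trace_mul_of_mem PauliGroup.one_mem (one_mul 1) S.one_mem rfl

end IsStabiliserGroup

theorem trace_eq_half_iff_not_mem_stabiliser_general {n : ℕ} (S : Subgroup (MatN n)ˣ) [Fintype S]
    (hsub : ∀ g ∈ S, ((g : (MatN n)ˣ) : MatN n) ∈ PauliGroup n)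
    (hneg : ∀ g ∈ S, ((g : (MatN n)ˣ) : MatN n) ≠ -1)
    (P : MatN n) (hP : P ∈ PauliGroup n) (hPh : P.IsHermitian)
    (E : MatN n) (hE : E = (2⁻¹ : ℂ) • ((1 : MatN n) + P))
    (ρ : MatN n) (hρ : ρ = ((2 : ℂ) ^ n)⁻¹ • ∑ s : S, ((s : (MatN n)ˣ) : MatN n)) :
    (E * ρ).trace = 1/2 ↔
      ((∀ u ∈ S, ((u : (MatN n)ˣ) : MatN n) ≠ P) ∧ (∀ u ∈ S, ((u : (MatN n)ˣ) : MatN n) ≠ -P)) := by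
  have hS : IsStabiliserGroup S := ⟨hsub, hneg⟩
  have hPP : P * P = 1 := PauliGroup.mul_self_of_isHermitian hP hPh
  have htr : (E * ρ).trace = (1 + (2 ^ n)⁻¹ * ∑ s : S, (P * (s : (MatN n)ˣ)).trace) / 2 := by
    rw [hE, hρ, Matrix.smul_mul, Matrix.mul_smul, Matrix.add_mul, one_mul, Matrix.trace_smul,
      Matrix.trace_smul, Matrix.trace_add, Finset.mul_sum, Matrix.trace_sum, Matrix.trace_sum,
      hS.sum_trace, smul_eq_mul, smul_eq_mul]
    field_simp
  by_cases hPS : ∃ u ∈ S, (u : MatN n) = P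
  · obtain ⟨u, hu, huP⟩ := hPS
    refine iff_of_false ?_ fun h => h.1 u hu huP
    rw [htr, hS.sum_trace_mul_of_mem hP hPP hu huP]
    norm_num
  by_cases hnPS : ∃ u ∈ S, (u : MatN n) = -P
  · obtain ⟨u, hu, huP⟩ := hnPS
    refine iff_of_false ?_ fun h => h.2 u hu huP
    rw [htr, hS.sum_trace_mul_of_neg_mem hP hPP hu huP]
    norm_num
  push Not at hPS hnPS
  refine iff_of_true ?_ ⟨hPS, hnPS⟩
  rw [htr, hS.sum_trace_mul_eq_zero hP hPP hPS hnPS]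
  norm_num

/-- Measurement lemma, case analysis for Tr(Eρ) with E = (I+P)/2 and
ρ = (1/2ⁿ) ∑_{S∈𝒮} S for a stabiliser group 𝒮. -/
theorem trace_eq_half_iff_not_mem_stabiliser {n : ℕ} (S : Subgroup (MatN n)ˣ) [Fintype S]
    (hsub : ∀ g ∈ S, ((g : (MatN n)ˣ) : MatN n) ∈ PauliGroup n)
    (habel : ∀ a ∈ S, ∀ b ∈ S, a * b = b * a)
    (hneg : ∀ g ∈ S, ((g : (MatN n)ˣ) : MatN n) ≠ -1)
    (P : MatN n) (hP : P ∈ PauliGroup n) (hPh : P.IsHermitian)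
    (hP1 : P ≠ 1) (hPn1 : P ≠ -1)
    (E : MatN n) (hE : E = (2⁻¹ : ℂ) • ((1 : MatN n) + P))
    (ρ : MatN n) (hρ : ρ = ((2 : ℂ) ^ n)⁻¹ • ∑ s : S, ((s : (MatN n)ˣ) : MatN n)) :
    (E * ρ).trace = 1/2 ↔
      ((∀ u ∈ S, ((u : (MatN n)ˣ) : MatN n) ≠ P) ∧ (∀ u ∈ S, ((u : (MatN n)ˣ) : MatN n) ≠ -P)) :=
  trace_eq_half_iff_not_mem_stabiliser_general S hsub hneg P hP hPh E hE ρ hρ
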